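/- arXiv:2312.04666 — 3 statements merged into one kernel-verified Lean document; each statement's English description precedes it below -/
import Mathlib

section
/- Every finitely generated ideal of Λ is principal. -/
/-!
Each `ℤ_ℓ[Γ_n]` is a principal ideal ring. As `|Γ_n|` is prime to `ℓ`, the reduction
`𝔽_ℓ[Γ_n]` is semisimple (Maschke), so an ideal `J` is generated by an idempotent modulo `ℓ`;
`ℤ_ℓ[Γ_n]` is `ℓ`-adically complete, hence Henselian, so this idempotent lifts to an idempotent
`e ∈ J` with `J ⊆ (e) + (ℓ)`, whence `J = (e) + ℓ (J : ℓ)`. If `(J : ℓ) = J`, Nakayama gives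
`J = (e)`; otherwise `(J : ℓ) = (d)` by Noetherian induction and `J = (e + (1 - e) ℓ d)`.

For `Λ`, write `I = (a₁, …, a_k)`. At each level the tuples `(d, c, b)` with `d = ∑ cᵢ aᵢ` and
`aⱼ = bⱼ d` form a nonempty closed subset of a compact Hausdorff space, and the transition maps
send them into each other. By compactness there is a compatible choice of such tuples, i.e. a
tuple over `Λ`, and its `d` generates `I`.
-/

section PrincipalIdealRing

open Ideal Polynomial

variable {R : Type*} [CommRing R]

theorem HenselianRing.exists_isIdempotentElem_sub_mem {I : Ideal R} [HenselianRing R I] {a : R}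
    (ha : a * a - a ∈ I) : ∃ e, IsIdempotentElem e ∧ e - a ∈ I := by
  have hunit : IsUnit (Ideal.Quotient.mk I (2 * a - 1)) := by
    refine .of_mul_eq_one (Ideal.Quotient.mk I (2 * a - 1)) ?_
    rw [← map_mul, ← map_one (Ideal.Quotient.mk I), Ideal.Quotient.eq]
    convert I.mul_mem_left 4 ha using 1
    ring
  obtain ⟨e, he, hea⟩ := HenselianRing.is_henselian (X ^ 2 - X) (by monicity!) a
    (by simpa [sq] using ha) (by convert hunit using 2; simp; ring)
  exact ⟨e, by simpa [IsIdempotentElem, sq, sub_eq_zero] using he, hea⟩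

theorem IsIdempotentElem.span_singleton_sup_span_singleton {e : R} (he : IsIdempotentElem e)
    (x : R) : span {e} ⊔ span {x} = span {e + (1 - e) * x} := by
  have hge : e * (e + (1 - e) * x) = e := by linear_combination (1 - x) * he.eq
  refine le_antisymm (sup_le ?_ ?_) ?_
  · exact span_le.mpr <| Set.singleton_subset_iff.mpr <| mem_span_singleton'.mpr ⟨e, hge⟩
  · refine span_le.mpr <| Set.singleton_subset_iff.mpr <|
      mem_span_singleton'.mpr ⟨x * e - e + 1, ?_⟩
    linear_combination (x - 1) * hge
  · exact span_le.mpr <| Set.singleton_subset_iff.mpr <| add_mem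
      (Submodule.mem_sup_left (mem_span_singleton_self e))
      (Submodule.mem_sup_right (mul_mem_left _ _ (mem_span_singleton_self x)))

theorem exists_isIdempotentElem_mem_and_le_span_sup {I : Ideal R} [HenselianRing R I]
    [IsSemisimpleRing (R ⧸ I)] (J : Ideal R) :
    ∃ e, IsIdempotentElem e ∧ e ∈ J ∧ J ≤ span {e} ⊔ I := by
  obtain ⟨ε, hε, hJε⟩ :=
    IsSemisimpleRing.ideal_eq_span_idempotent (J.map (Ideal.Quotient.mk I))
  obtain ⟨a, rfl⟩ := Ideal.Quotient.mk_surjective ε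
  obtain ⟨e, he, hea⟩ := HenselianRing.exists_isIdempotentElem_sub_mem (I := I) (a := a) <| by
    rw [← Ideal.Quotient.eq_zero_iff_mem, map_sub, map_mul, hε.eq, sub_self]
  have hmap : J.map (Ideal.Quotient.mk I) = (span {e}).map (Ideal.Quotient.mk I) := by
    rw [hJε, map_span, Set.image_singleton, Ideal.Quotient.eq.mpr hea]
  have hsup : J ⊔ I = span {e} ⊔ I := by
    simpa only [comap_map_of_surjective' _ Ideal.Quotient.mk_surjective, mk_ker]
      using congrArg (comap (Ideal.Quotient.mk I)) hmap
  refine ⟨e, he, ?_, hsup ▸ le_sup_left⟩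
  obtain ⟨u, hu, v, hv, huv⟩ :=
    Submodule.mem_sup.mp (hsup ▸ Submodule.mem_sup_left (mem_span_singleton_self e))
  -- `1 - v` is a unit because `I` lies in the Jacobson radical, and `e * (1 - v) = e * u ∈ J`.
  have hunit : IsUnit (1 - v) := by
    simpa [sub_eq_add_neg, add_comm] using mem_jacobson_bot.mp (HenselianRing.jac hv) (-1)
  have heu : e * (1 - v) = e * u := by linear_combination (-e) * huv - he.eq
  rw [← mul_unit_mem_iff_mem J hunit, heu]
  exact J.mul_mem_left e hu

theorem eq_span_sup_span_mul_colon {J : Ideal R} {e c : R} (he : e ∈ J)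
    (hJ : J ≤ span {e} ⊔ span {c}) : J = span {e} ⊔ span {c} * J.colon (span {c}) := by
  have hspan : span {e} ≤ J := span_le.mpr (Set.singleton_subset_iff.mpr he)
  refine le_antisymm (fun x hx => ?_) (sup_le hspan (mul_le.mpr fun y hy s hs => ?_))
  · obtain ⟨u, hu, v, hv, rfl⟩ := Submodule.mem_sup.mp (hJ hx)
    obtain ⟨s, rfl⟩ := mem_span_singleton'.mp hv
    have hs : s ∈ J.colon (span {c}) := mem_colon_span_singleton.mpr <| by
      simpa using J.sub_mem hx (hspan hu)
    exact add_mem (Submodule.mem_sup_left hu)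
      (Submodule.mem_sup_right (mul_comm c s ▸ mul_mem_mul (mem_span_singleton_self c) hs))
  · obtain ⟨t, rfl⟩ := mem_span_singleton'.mp hy
    simpa [mul_right_comm t c s, mul_assoc] using
      J.mul_mem_left t (mem_colon_span_singleton.mp hs)

theorem isPrincipalIdealRing_of_henselianRing [IsNoetherianRing R] {I : Ideal R}
    (hI : I.IsPrincipal) [HenselianRing R I] [IsSemisimpleRing (R ⧸ I)] :
    IsPrincipalIdealRing R := by
  obtain ⟨c, hc⟩ := hI
  rw [Ideal.submodule_span_eq] at hc
  subst hc
  refine ⟨fun J => IsNoetherian.induction (P := fun J : Ideal R => J.IsPrincipal)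
    (fun J IH => ?_) J⟩
  obtain ⟨e, he, heJ, hJ⟩ := exists_isIdempotentElem_mem_and_le_span_sup (I := span {c}) J
  have hJeq := eq_span_sup_span_mul_colon heJ hJ
  rcases (le_colon : J ≤ J.colon (span {c})).eq_or_lt with hcolon | hcolon
  · -- Nakayama: `J = (e) + c J` forces `J = (e)`.
    refine ⟨e, le_antisymm (Submodule.le_of_le_smul_of_le_jacobson_bot (IsNoetherian.noetherian J)
      (HenselianRing.jac (I := span {c})) ?_) (span_le.mpr (Set.singleton_subset_iff.mpr heJ))⟩
    rw [smul_eq_mul]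
    exact hJeq.le.trans_eq (by rw [← hcolon])
  · obtain ⟨d, hd⟩ := IH _ hcolon
    refine ⟨e + (1 - e) * (c * d), ?_⟩
    rw [hJeq, hd, submodule_span_eq, span_singleton_mul_span_singleton,
      he.span_singleton_sup_span_singleton]

end PrincipalIdealRing

section AdicComplete

open Ideal

variable {R : Type*} [CommRing R] (I : Ideal R)
variable {M N : Type*} [AddCommGroup M] [Module R M] [AddCommGroup N] [Module R N]

theorem IsAdicComplete.of_linearEquiv (e : M ≃ₗ[R] N) [IsAdicComplete I M] :
    IsAdicComplete I N := by
  have hM := AdicCompletion.of_bijective_iff.mpr ‹IsAdicComplete I M›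
  refine AdicCompletion.of_bijective_iff.mp ?_
  have : ⇑(AdicCompletion.of I N) =
      AdicCompletion.congr I e ∘ AdicCompletion.of I M ∘ e.symm := by
    ext x; simp [AdicCompletion.congr_apply, AdicCompletion.map_of]
  rw [this]
  exact (AdicCompletion.congr I e).bijective.comp (hM.comp e.symm.bijective)

theorem IsAdicComplete.pi {ι : Type*} [Finite ι] (M : ι → Type*) [∀ i, AddCommGroup (M i)]
    [∀ i, Module R (M i)] [∀ i, IsAdicComplete I (M i)] : IsAdicComplete I (∀ i, M i) := by
  classical
  have := Fintype.ofFinite ι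
  rw [← AdicCompletion.of_bijective_iff]
  have : ⇑(AdicCompletion.of I (∀ i, M i)) =
      (AdicCompletion.piEquivOfFintype I M).symm ∘ Pi.map fun i => AdicCompletion.of I (M i) := by
    ext x : 1
    rw [Function.comp_apply, LinearEquiv.eq_symm_apply, AdicCompletion.piEquivOfFintype_apply]
    ext i : 1
    simp only [AdicCompletion.pi, LinearMap.pi_apply, AdicCompletion.map_of, LinearMap.proj_apply]
    rfl
  rw [this]
  exact (LinearEquiv.bijective _).comp
    (Function.Bijective.piMap fun i => AdicCompletion.of_bijective_iff.mpr inferInstance)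

theorem IsAdicComplete.of_free [Module.Free R M] [Module.Finite R M] [IsAdicComplete I R] :
    IsAdicComplete I M :=
  have := IsAdicComplete.pi I fun _ : Module.Free.ChooseBasisIndex R M => R
  .of_linearEquiv I (Module.Free.chooseBasis R M).equivFun.symm

end AdicComplete

theorem MonoidAlgebra.isSemisimpleRing_quotient_map {R : Type*} [CommRing R] (𝔪 : Ideal R)
    [𝔪.IsMaximal] {G : Type*} [CommGroup G] [Finite G] [NeZero (Nat.card G : R ⧸ 𝔪)] :
    IsSemisimpleRing (MonoidAlgebra R G ⧸ 𝔪.map (algebraMap R (MonoidAlgebra R G))) :=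
  letI := Ideal.Quotient.field 𝔪
  ((Algebra.TensorProduct.quotIdealMapEquivQuotTensor _ 𝔪).trans
    (MonoidAlgebra.scalarTensorEquiv R (R ⧸ 𝔪))).toRingEquiv.symm.isSemisimpleRing

theorem MonoidAlgebra.isPrincipalIdealRing_of_isAdicComplete {R : Type*} [CommRing R]
    [IsNoetherianRing R] (𝔪 : Ideal R) [𝔪.IsMaximal] (h𝔪 : 𝔪.IsPrincipal) [IsAdicComplete 𝔪 R]
    {G : Type*} [CommGroup G] [Finite G] (hG : IsUnit (Nat.card G : R)) :
    IsPrincipalIdealRing (MonoidAlgebra R G) := by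
  have : IsNoetherianRing (MonoidAlgebra R G) := isNoetherian_of_tower R inferInstance
  have : IsAdicComplete (𝔪.map (algebraMap R (MonoidAlgebra R G))) (MonoidAlgebra R G) :=
    (IsAdicComplete.map_algebraMap_iff _ _).mpr (.of_free 𝔪)
  have : NeZero (Nat.card G : R ⧸ 𝔪) :=
    ⟨by simpa using (hG.map (Ideal.Quotient.mk 𝔪)).ne_zero⟩
  have := MonoidAlgebra.isSemisimpleRing_quotient_map 𝔪 (G := G)
  exact isPrincipalIdealRing_of_henselianRing
    (h𝔪.map_ringHom (algebraMap R (MonoidAlgebra R G)))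

theorem PadicInt.monoidAlgebra_isPrincipalIdealRing {ℓ : ℕ} [Fact ℓ.Prime] {G : Type*}
    [CommGroup G] [Finite G] (hG : ℓ.Coprime (Nat.card G)) :
    IsPrincipalIdealRing (MonoidAlgebra ℤ_[ℓ] G) :=
  MonoidAlgebra.isPrincipalIdealRing_of_isAdicComplete (IsLocalRing.maximalIdeal ℤ_[ℓ])
    ⟨_, PadicInt.maximalIdeal_eq_span_p⟩
    (PadicInt.isUnit_iff.mpr (PadicInt.norm_natCast_eq_one_iff.mpr hG))

section ModuleTopology

variable (R : Type*) [CommRing R] [TopologicalSpace R] [IsTopologicalRing R]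
  (A : Type*) [AddCommGroup A] [Module R A] [Module.Finite R A] [TopologicalSpace A]
  [IsModuleTopology R A]

theorem IsModuleTopology.compactSpace [CompactSpace R] : CompactSpace A := by
  have := IsModuleTopology.toContinuousAdd R A
  obtain ⟨m, f, hf⟩ := Module.Finite.exists_fin' R A
  exact hf.compactSpace (IsModuleTopology.continuous_of_linearMap f)

theorem IsModuleTopology.t2Space [Module.Free R A] [T2Space R] : T2Space A :=
  .of_injective_continuous (Module.Free.chooseBasis R A).equivFun.injective
    (IsModuleTopology.continuous_of_linearMap
      (Module.Free.chooseBasis R A).equivFun.toLinearMap)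

end ModuleTopology

theorem exists_forall_mem_and_compatible {X : ℕ → Type*} [∀ n, TopologicalSpace (X n)]
    [∀ n, CompactSpace (X n)] [∀ n, T2Space (X n)]
    (f : ∀ m n, n ≤ m → X m → X n) (hf : ∀ m n h, Continuous (f m n h))
    (hcomp : ∀ k m n (hnm : n ≤ m) (hmk : m ≤ k) x,
      f m n hnm (f k m hmk x) = f k n (hnm.trans hmk) x)
    {S : ∀ n, Set (X n)} (hS : ∀ n, IsClosed (S n)) (hne : ∀ n, (S n).Nonempty)
    (hmaps : ∀ m n h, Set.MapsTo (f m n h) (S m) (S n)) :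
    ∃ x : ∀ n, X n, (∀ n, x n ∈ S n) ∧ ∀ m n h, f m n h (x m) = x n := by
  classical
  set K : ℕ → Set (∀ n, X n) := fun N =>
    {x | ∀ m ≤ N, x m ∈ S m ∧ ∀ n (h : n ≤ m), f m n h (x m) = x n}
  have hclosed : ∀ N, IsClosed (K N) := fun N => by
    simp only [K, Set.ofPred_forall, Set.ofPred_and]
    exact isClosed_biInter fun m _ => ((hS m).preimage (continuous_apply m)).inter
      (isClosed_iInter fun n => isClosed_iInter fun h =>
        isClosed_eq ((hf m n h).comp (continuous_apply m)) (continuous_apply n))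
  have hnonempty : ∀ N, (K N).Nonempty := fun N => by
    obtain ⟨s, hs⟩ := hne N
    refine ⟨fun m => if h : m ≤ N then f N m h s else (hne m).some, fun m hm => ?_⟩
    simp only [dif_pos hm]
    refine ⟨hmaps N m hm hs, fun n hnm => ?_⟩
    rw [dif_pos (hnm.trans hm), hcomp]
  have hanti : ∀ N, K (N + 1) ⊆ K N := fun N x hx m hm => hx m (hm.trans N.le_succ)
  obtain ⟨x, hx⟩ := IsCompact.nonempty_iInter_of_sequence_nonempty_isCompact_isClosed K hanti
    hnonempty (hclosed 0).isCompact hclosed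
  rw [Set.mem_iInter] at hx
  exact ⟨x, fun n => (hx n n le_rfl).1, fun m n h => (hx m m le_rfl).2 n h⟩

section GeneratorCertificate

variable {A B : Type*} [CommRing A] [CommRing B] {k : ℕ}

/-- `(d, c, b)` certifies that `d` generates the ideal spanned by `a`. -/
def IsGeneratorCertificate (a : Fin k → A) (x : A × (Fin k → A) × (Fin k → A)) : Prop :=
  x.1 = ∑ i, x.2.1 i * a i ∧ ∀ j, a j = x.2.2 j * x.1

theorem IsGeneratorCertificate.span_range_eq {a : Fin k → A}
    {x : A × (Fin k → A) × (Fin k → A)} (h : IsGeneratorCertificate a x) :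
    Ideal.span (Set.range a) = Ideal.span {x.1} := by
  refine le_antisymm (Ideal.span_le.mpr ?_) (Ideal.span_le.mpr ?_)
  · rintro _ ⟨j, rfl⟩
    exact Ideal.mem_span_singleton'.mpr ⟨x.2.2 j, (h.2 j).symm⟩
  · rw [Set.singleton_subset_iff, SetLike.mem_coe, h.1]
    exact Ideal.sum_mem _ fun i _ => Ideal.mul_mem_left _ _ (Ideal.subset_span ⟨i, rfl⟩)

theorem exists_isGeneratorCertificate [IsPrincipalIdealRing A] (a : Fin k → A) :
    ∃ x, IsGeneratorCertificate a x := by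
  obtain ⟨d, hd⟩ := IsPrincipalIdealRing.principal (Ideal.span (Set.range a))
  rw [Ideal.submodule_span_eq] at hd
  obtain ⟨c, hc⟩ := (Submodule.mem_span_range_iff_exists_fun A).mp
    (hd ▸ Ideal.mem_span_singleton_self d)
  choose b hb using fun j =>
    Ideal.mem_span_singleton'.mp (hd ▸ Ideal.subset_span (Set.mem_range_self j))
  exact ⟨(d, c, b), And.intro (by simpa using hc.symm) fun j => (hb j).symm⟩

theorem IsGeneratorCertificate.map {a : Fin k → A} {x : A × (Fin k → A) × (Fin k → A)}
    (h : IsGeneratorCertificate a x) (f : A →+* B) :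
    IsGeneratorCertificate (f ∘ a) (f x.1, f ∘ x.2.1, f ∘ x.2.2) :=
  ⟨by simp [h.1], fun j => by simp [h.2 j]⟩

theorem isClosed_setOf_isGeneratorCertificate [TopologicalSpace A] [IsTopologicalRing A]
    [T2Space A] (a : Fin k → A) : IsClosed {x | IsGeneratorCertificate a x} := by
  simp only [IsGeneratorCertificate, Set.ofPred_and, Set.ofPred_forall]
  exact (isClosed_eq (by fun_prop) (by fun_prop)).inter
    (isClosed_iInter fun j => isClosed_eq (by fun_prop) (by fun_prop))

end GeneratorCertificate

theorem isPrincipal_of_fg_of_inverseLimit {R : Type*} [CommRing R] [TopologicalSpace R]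
    [IsTopologicalRing R] [CompactSpace R] [T2Space R]
    {A : ℕ → Type*} [∀ n, CommRing (A n)] [∀ n, Algebra R (A n)] [∀ n, Module.Finite R (A n)]
    [∀ n, Module.Free R (A n)] [∀ n, IsPrincipalIdealRing (A n)]
    (T : ∀ m n, n ≤ m → A m →ₐ[R] A n)
    (hcomp : ∀ k m n (hnm : n ≤ m) (hmk : m ≤ k) x,
      T m n hnm (T k m hmk x) = T k n (hnm.trans hmk) x)
    (Λ : Subring (∀ n, A n)) (hΛ : ∀ x, x ∈ Λ ↔ ∀ m n h, T m n h (x m) = x n)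
    (I : Ideal Λ) (hI : I.FG) : I.IsPrincipal := by
  let := fun n => moduleTopology R (A n)
  have : ∀ n, IsModuleTopology R (A n) := fun n => ⟨rfl⟩
  have := fun n => IsModuleTopology.isTopologicalRing R (A n)
  have := fun n => IsModuleTopology.compactSpace R (A n)
  have := fun n => IsModuleTopology.t2Space R (A n)
  have hT : ∀ m n h, Continuous (T m n h) := fun m n h =>
    IsModuleTopology.continuous_of_linearMap (T m n h).toLinearMap
  obtain ⟨k, a, rfl⟩ := Submodule.fg_iff_exists_fin_generating_family.mp hI
  have ha : ∀ i m n h, T m n h ((a i : ∀ n, A n) m) = (a i : ∀ n, A n) n :=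
    fun i => (hΛ _).mp (a i).2
  obtain ⟨x, hxS, hx⟩ := exists_forall_mem_and_compatible
    (X := fun n => A n × (Fin k → A n) × (Fin k → A n))
    (fun m n h y => (T m n h y.1, T m n h ∘ y.2.1, T m n h ∘ y.2.2))
    (fun m n h => by have := hT m n h; fun_prop)
    (fun l m n hnm hmk y => by simp [Function.comp_def, hcomp])
    (S := fun n => {y | IsGeneratorCertificate (fun i => (a i : ∀ n, A n) n) y})
    (fun n => isClosed_setOf_isGeneratorCertificate _)
    (fun n => exists_isGeneratorCertificate _)
    (fun m n h y hy => by
      simpa [Function.comp_def, ha] using hy.map (T m n h : A m →+* A n))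
  let d : Λ := ⟨fun n => (x n).1, (hΛ _).mpr fun m n h => congrArg Prod.fst (hx m n h)⟩
  let c : Fin k → Λ := fun i => ⟨fun n => (x n).2.1 i,
    (hΛ _).mpr fun m n h => congrFun (congrArg (·.2.1) (hx m n h)) i⟩
  let b : Fin k → Λ := fun i => ⟨fun n => (x n).2.2 i,
    (hΛ _).mpr fun m n h => congrFun (congrArg (·.2.2) (hx m n h)) i⟩
  have hcert : IsGeneratorCertificate a (d, c, b) :=
    And.intro (Subtype.ext <| funext fun n => by simpa [d, c] using (hxS n).1)
      fun j => Subtype.ext <| funext fun n => by simpa [d, b] using (hxS n).2 j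
  exact ⟨d, hcert.span_range_eq⟩

variable (ℓ p : ℕ) [Fact ℓ.Prime] [Fact p.Prime]

/-- The `ℓ`-adic Iwasawa algebra `Λ = lim← ℤ_ℓ[Γ_n]` of an inverse system `(Γ_n)` of finite
abelian `p`-groups, realized as the subring of `∏ n, ℤ_ℓ[Γ_n]` consisting of the sequences
compatible under the ring homomorphisms induced by the transition maps `π m n`. -/
noncomputable def IwasawaAlgebra (Γ : ℕ → Type) [∀ n, CommGroup (Γ n)] [∀ n, Fintype (Γ n)]
    (π : ∀ m n : ℕ, n ≤ m → (Γ m →* Γ n)) :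
    Subring (∀ n, MonoidAlgebra ℤ_[ℓ] (Γ n)) where
  carrier := {x | ∀ (m n : ℕ) (h : n ≤ m),
    MonoidAlgebra.mapDomainRingHom ℤ_[ℓ] (π m n h) (x m) = x n}
  mul_mem' := fun {x y} hx hy m n h => by
    simp only [Pi.mul_apply, map_mul, hx m n h, hy m n h]
  one_mem' := fun m n h => by simp only [Pi.one_apply, map_one]
  add_mem' := fun {x y} hx hy m n h => by
    simp only [Pi.add_apply, map_add, hx m n h, hy m n h]
  zero_mem' := fun m n h => by simp only [Pi.zero_apply, map_zero]
  neg_mem' := fun {x} hx m n h => by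
    simp only [Pi.neg_apply, map_neg, hx m n h]

theorem iwasawaAlgebra_fg_ideal_isPrincipal
    (Γ : ℕ → Type) [∀ n, CommGroup (Γ n)] [∀ n, Fintype (Γ n)]
    (π : ∀ m n : ℕ, n ≤ m → (Γ m →* Γ n))
    (hpgroup : ∀ n, IsPGroup p (Γ n)) (hlp : ℓ ≠ p)
    (hcomp : ∀ (k m n : ℕ) (hnm : n ≤ m) (hmk : m ≤ k),
      (π m n hnm).comp (π k m hmk) = π k n (le_trans hnm hmk))
    (I : Ideal (IwasawaAlgebra ℓ Γ π)) (hI : I.FG) :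
    Submodule.IsPrincipal I := by
  have hcoprime : ∀ n, ℓ.Coprime (Nat.card (Γ n)) := fun n => by
    obtain ⟨k, hk⟩ := IsPGroup.iff_card.mp (hpgroup n)
    rw [hk]
    exact ((Nat.coprime_primes Fact.out Fact.out).mpr hlp).pow_right k
  have := fun n => PadicInt.monoidAlgebra_isPrincipalIdealRing (hcoprime n)
  exact isPrincipal_of_fg_of_inverseLimit
    (fun m n h => MonoidAlgebra.mapDomainAlgHom ℤ_[ℓ] ℤ_[ℓ] (π m n h))
    (fun k m n hnm hmk x => by
      rw [← AlgHom.comp_apply, ← MonoidAlgebra.mapDomainAlgHom_comp, hcomp])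
    _ (fun _ => Iff.rfl) I hI
end

section
/- For each n let G_n := ker(Γ → Γ_n) and let I_n ⊆ Λ be the closure of the ideal generated by {γ − 1 : γ ∈ G_n}, where each γ ∈ Γ is viewed in Λ via its compatible sequence of images in the Γ_m. Then the natural projection Λ → ℤ_ℓ[Γ_n] is surjective with kernel I_n, so Λ/I_n ≅ ℤ_ℓ[Γ_n]; moreover every augmentation ideal I_n is idempotent: I_n² = I_n. -/
set_option maxHeartbeats 1000000
set_option synthInstance.maxHeartbeats 400000

variable (ℓ p : ℕ) [Fact ℓ.Prime] [Fact p.Prime]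

/-- The profinite group `Γ = lim← Γ_n`, realized as the subgroup of `∏ n, Γ n` of
compatible sequences. -/
def IwasawaGamma (Γ : ℕ → Type) [∀ n, CommGroup (Γ n)]
    (π : ∀ m n : ℕ, n ≤ m → (Γ m →* Γ n)) :
    Subgroup (∀ n, Γ n) where
  carrier := {x | ∀ (m n : ℕ) (h : n ≤ m), π m n h (x m) = x n}
  mul_mem' := fun {x y} hx hy m n h => by
    simp only [Pi.mul_apply, map_mul, hx m n h, hy m n h]
  one_mem' := fun m n h => by simp only [Pi.one_apply, map_one]
  inv_mem' := fun {x} hx m n h => by simp only [Pi.inv_apply, map_inv, hx m n h]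

/-- Topology on `ℤ_ℓ[Γ_n]`: the topology of a free `ℤ_ℓ`-module of finite rank, i.e. the
topology induced by the coefficient functions. -/
noncomputable instance monoidAlgebraTopology (G : Type) :
    TopologicalSpace (MonoidAlgebra ℤ_[ℓ] G) :=
  TopologicalSpace.induced (fun x : MonoidAlgebra ℤ_[ℓ] G => (x.coeff : G → ℤ_[ℓ]))
    inferInstance

/-- The canonical image of a group element `γ ∈ Γ = lim← Γ_n` in the Iwasawa algebra
`Λ = lim← ℤ_ℓ[Γ_n]`. -/
noncomputable def gammaToLambda (Γ : ℕ → Type) [∀ n, CommGroup (Γ n)] [∀ n, Fintype (Γ n)]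
    (π : ∀ m n : ℕ, n ≤ m → (Γ m →* Γ n)) (γ : IwasawaGamma Γ π) :
    IwasawaAlgebra ℓ Γ π :=
  ⟨fun n => MonoidAlgebra.single ((γ : ∀ n, Γ n) n) 1, by
    intro m n h
    simp only [MonoidAlgebra.mapDomainRingHom_apply, MonoidAlgebra.mapDomain_single,
      γ.2 m n h]⟩

/-- The projection `Λ → ℤ_ℓ[Γ_n]`. -/
noncomputable def lambdaProj (Γ : ℕ → Type) [∀ n, CommGroup (Γ n)] [∀ n, Fintype (Γ n)]
    (π : ∀ m n : ℕ, n ≤ m → (Γ m →* Γ n)) (n : ℕ) :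
    IwasawaAlgebra ℓ Γ π →+* MonoidAlgebra ℤ_[ℓ] (Γ n) :=
  (Pi.evalRingHom (fun n => MonoidAlgebra ℤ_[ℓ] (Γ n)) n).comp
    (IwasawaAlgebra ℓ Γ π).subtype

/-! For `n ≤ M` the kernel `K_M` of `Γ_M → Γ_n` is a `p`-group, so `|K_M|` is a unit of `ℤ_ℓ`
and `σ_M := |K_M|⁻¹ ∑_{k ∈ K_M} k ∈ ℤ_ℓ[Γ_M]` satisfies `σ_M y = 0` whenever `y` maps to `0` in
`ℤ_ℓ[Γ_n]`. Since `1 - σ_M = -|K_M|⁻¹ ∑_{k ∈ K_M} (k - 1)`, it is the image of some `z_M` in the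
algebraic augmentation ideal, and for `x` in the kernel `z_M x` agrees with `x` in all coordinates
`≤ M`, so `z_M x → x`. The transition maps send `σ_M` to `σ_{M'}`, so the `1 - σ_M` glue to an
`ε ∈ Λ` which lies in the kernel and acts as the identity on it; hence the kernel is idempotent. -/

open Finset MonoidAlgebra

section CompatibleSequence

variable {X : ℕ → Type*} (f : ∀ m n, n ≤ m → X m → X n)

theorem exists_compatible_extension_of_tail
    (hcomp : ∀ k m n (hnm : n ≤ m) (hmk : m ≤ k) (x : X k),
      f m n hnm (f k m hmk x) = f k n (hnm.trans hmk) x)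
    {m : ℕ} (u : ∀ k, X (m + k))
    (hu : ∀ a b (h : b ≤ a), f (m + a) (m + b) (Nat.add_le_add_left h m) (u a) = u b) :
    ∃ s : ∀ j, X j, (∀ a b (h : b ≤ a), f a b h (s a) = s b) ∧ ∀ k, s (m + k) = u k := by
  refine ⟨fun j => f (m + j) j (Nat.le_add_left j m) (u j), fun a b h => ?_,
    fun k => hu (m + k) k (Nat.le_add_left k m)⟩
  dsimp only
  rw [hcomp, ← hu a b h, hcomp]

theorem exists_compatible_eq_of_surjective (hid : ∀ n x, f n n le_rfl x = x)
    (hcomp : ∀ k m n (hnm : n ≤ m) (hmk : m ≤ k) (x : X k),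
      f m n hnm (f k m hmk x) = f k n (hnm.trans hmk) x)
    (hsurj : ∀ n, Function.Surjective (f (n + 1) n n.le_succ)) {m : ℕ} (x : X m) :
    ∃ s : ∀ j, X j, (∀ a b (h : b ≤ a), f a b h (s a) = s b) ∧ s m = x := by
  let u : ∀ k, X (m + k) := fun k =>
    Nat.rec (motive := fun k => X (m + k)) x (fun k y => Function.surjInv (hsurj (m + k)) y) k
  have hstep : ∀ k, f (m + (k + 1)) (m + k) (m + k).le_succ (u (k + 1)) = u k := fun k =>
    Function.surjInv_eq (hsurj (m + k)) (u k)
  have hu : ∀ a b (h : b ≤ a), f (m + a) (m + b) (Nat.add_le_add_left h m) (u a) = u b := by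
    intro a b h
    induction a, h using Nat.le_induction with
    | base => exact hid _ _
    | succ a hba ih =>
      rw [← hcomp (m + (a + 1)) (m + a) _ (Nat.add_le_add_left hba m) (m + a).le_succ, hstep, ih]
  obtain ⟨s, hs, hsu⟩ := exists_compatible_extension_of_tail f hcomp u hu
  exact ⟨s, hs, hsu 0⟩

end CompatibleSequence

section KernelAverage

variable (R : Type*) [CommRing R] {G G' G'' : Type*} [Group G] [Fintype G]

noncomputable def kerSum [Group G'] [DecidableEq G'] (f : G →* G') : MonoidAlgebra R G :=
  ∑ g with f g = 1, single g 1

noncomputable def kerAverage [Group G'] [DecidableEq G'] (f : G →* G') : MonoidAlgebra R G :=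
  Ring.inverse (#{g | f g = 1} : R) • kerSum R f

variable {R}

theorem kerSum_mul_single_of_map_eq_one [Group G'] [DecidableEq G'] {f : G →* G'} {k : G}
    (hk : f k = 1) : kerSum R f * single k 1 = kerSum R f := by
  simp only [kerSum, sum_mul, single_mul_single, mul_one]
  refine sum_nbij' (· * k) (· * k⁻¹) ?_ ?_ ?_ ?_ fun _ _ => rfl <;> simp [hk]

theorem kerSum_mul_single_eq_of_map_eq [Group G'] [DecidableEq G'] {f : G →* G'} {a b : G}
    (hab : f a = f b) (r : R) : kerSum R f * single a r = kerSum R f * single b r := by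
  have hk : f (a * b⁻¹) = 1 := by rw [map_mul, map_inv, hab, mul_inv_cancel]
  calc kerSum R f * single a r = kerSum R f * single (a * b⁻¹) 1 * single b r := by
        rw [mul_assoc, single_mul_single, one_mul, inv_mul_cancel_right]
    _ = kerSum R f * single b r := by rw [kerSum_mul_single_of_map_eq_one hk]

theorem kerSum_mul_eq_zero [Group G'] [DecidableEq G'] {f : G →* G'} {y : MonoidAlgebra R G}
    (hy : mapDomainRingHom R f y = 0) : kerSum R f * y = 0 := by
  have hfactor : ∀ y : MonoidAlgebra R G,
      kerSum R f * y = kerSum R f * mapDomain (Function.invFun f) (mapDomainRingHom R f y) := by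
    intro y
    induction y using MonoidAlgebra.induction_linear with
    | zero => simp
    | add x y hx hy => rw [mul_add, hx, hy, map_add, mapDomain_add, mul_add]
    | single g r =>
      rw [mapDomainRingHom_apply, mapDomain_single, mapDomain_single]
      exact kerSum_mul_single_eq_of_map_eq (Function.invFun_eq ⟨g, rfl⟩).symm r
  rw [hfactor, hy, mapDomain_zero, mul_zero]

theorem one_sub_kerAverage_mul [Group G'] [DecidableEq G'] {f : G →* G'} {y : MonoidAlgebra R G}
    (hy : mapDomainRingHom R f y = 0) : (1 - kerAverage R f) * y = y := by
  rw [sub_mul, one_mul, kerAverage, smul_mul_assoc, kerSum_mul_eq_zero hy, smul_zero, sub_zero]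

theorem mapDomainRingHom_kerAverage [Group G'] [DecidableEq G'] (f : G →* G')
    (hf : IsUnit (#{g | f g = 1} : R)) : mapDomainRingHom R f (kerAverage R f) = 1 := by
  have hsum : mapDomainRingHom R f (kerSum R f) = #{g | f g = 1} • 1 := by
    rw [kerSum, map_sum, ← sum_const]
    refine sum_congr rfl fun g hg => ?_
    rw [mapDomainRingHom_apply, mapDomain_single, (mem_filter.mp hg).2, one_def]
  rw [kerAverage, mapDomainRingHom_apply, mapDomain_smul, ← mapDomainRingHom_apply, hsum,
    ← Nat.cast_smul_eq_nsmul R, smul_smul, Ring.inverse_mul_cancel _ hf, one_smul]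

theorem one_sub_kerAverage_mem_span [Group G'] [DecidableEq G'] (f : G →* G')
    (hf : IsUnit (#{g | f g = 1} : R)) :
    1 - kerAverage R f ∈ Ideal.span ((fun k => single k (1 : R) - 1) '' {k | f k = 1}) := by
  have hrepr : 1 - kerAverage R f =
      (-Ring.inverse (#{g | f g = 1} : R)) • ∑ k with f k = 1, (single k (1 : R) - 1) := by
    rw [sum_sub_distrib, sum_const, ← kerSum, smul_sub, neg_smul, neg_smul, sub_neg_eq_add,
      ← Nat.cast_smul_eq_nsmul R, smul_smul, Ring.inverse_mul_cancel _ hf, one_smul, kerAverage]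
    abel
  rw [hrepr]
  exact Submodule.smul_of_tower_mem _ _
    (Ideal.sum_mem _ fun k hk => Ideal.subset_span ⟨k, (mem_filter.mp hk).2, rfl⟩)

section Composition

variable [Group G'] [DecidableEq G'] [Group G''] [DecidableEq G'']
  {g : G →* G'} (f : G' →* G'')

theorem image_filter_map_comp_eq_one [Fintype G'] (hg : Function.Surjective g) :
    Finset.image g ({a | f (g a) = 1} : Finset G) = ({b | f b = 1} : Finset G') := by
  ext b
  simp only [mem_image, mem_filter, mem_univ, true_and]
  constructor
  · rintro ⟨a, ha, rfl⟩
    exact ha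
  · intro hb
    obtain ⟨a, rfl⟩ := hg b
    exact ⟨a, hb, rfl⟩

theorem card_filter_map_comp_fiber (hg : Function.Surjective g) {b : G'} (hb : f b = 1) :
    #{a ∈ ({a | f (g a) = 1} : Finset G) | g a = b} = #{a | g a = 1} := by
  rw [filter_filter, filter_congr fun a _ => ⟨And.right, fun h => ⟨h ▸ hb, h⟩⟩]
  exact MonoidHom.card_fiber_eq_of_mem_range g (hg b) ⟨1, map_one g⟩

theorem card_filter_map_comp_eq_one [Fintype G'] (hg : Function.Surjective g) :
    #{a | f (g a) = 1} = #{b | f b = 1} * #{a | g a = 1} := by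
  rw [card_eq_sum_card_image g, image_filter_map_comp_eq_one f hg,
    sum_congr rfl fun b hb => card_filter_map_comp_fiber f hg (mem_filter.mp hb).2, sum_const,
    smul_eq_mul]

theorem mapDomainRingHom_kerSum_comp [Fintype G'] (hg : Function.Surjective g) :
    mapDomainRingHom R g (kerSum R (f.comp g)) = #{a | g a = 1} • kerSum R f := by
  simp only [kerSum, map_sum, mapDomainRingHom_apply, mapDomain_single, MonoidHom.coe_comp,
    Function.comp_apply]
  rw [sum_comp (fun b => single b (1 : R)) g, image_filter_map_comp_eq_one f hg, smul_sum]
  exact sum_congr rfl fun b hb => by rw [card_filter_map_comp_fiber f hg (mem_filter.mp hb).2]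

theorem mapDomainRingHom_kerAverage_comp [Fintype G'] (hg : Function.Surjective g)
    (hunit : IsUnit (#{a | g a = 1} : R)) :
    mapDomainRingHom R g (kerAverage R (f.comp g)) = kerAverage R f := by
  rw [kerAverage, mapDomainRingHom_apply, mapDomain_smul, ← mapDomainRingHom_apply,
    mapDomainRingHom_kerSum_comp f hg]
  simp only [MonoidHom.coe_comp, Function.comp_apply]
  rw [card_filter_map_comp_eq_one f hg, Nat.cast_mul, Ring.mul_inverse_rev,
    ← Nat.cast_smul_eq_nsmul R, smul_smul, mul_right_comm, Ring.inverse_mul_cancel _ hunit,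
    one_mul, kerAverage]

end Composition

theorem isUnit_card_ker_of_isPGroup {ℓ p : ℕ} [Fact ℓ.Prime] [Fact p.Prime] [Group G']
    [DecidableEq G'] (hG : IsPGroup p G) (hlp : ℓ ≠ p) (f : G →* G') :
    IsUnit (#{g | f g = 1} : ℤ_[ℓ]) := by
  obtain ⟨k, hk⟩ := IsPGroup.iff_card.mp (hG.to_subgroup f.ker)
  have hcard : #{g | f g = 1} = p ^ k := by
    rw [← hk]
    simp [Nat.card_eq_fintype_card, Fintype.card_subtype, MonoidHom.mem_ker]
  rw [hcard, PadicInt.isUnit_iff, PadicInt.norm_natCast_eq_one_iff]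
  exact Nat.Coprime.pow_right k ((Nat.coprime_primes Fact.out Fact.out).mpr hlp)

end KernelAverage

section Transition

variable (R : Type*) [Semiring R] {Γ : ℕ → Type} [∀ n, CommGroup (Γ n)]
  {π : ∀ m n : ℕ, n ≤ m → (Γ m →* Γ n)}

theorem mapDomainRingHom_surjective {G H : Type*} [Monoid G] [Monoid H] {f : G →* H}
    (hf : Function.Surjective f) : Function.Surjective (mapDomainRingHom R f) := by
  intro y
  obtain ⟨v, hv⟩ := Finsupp.mapDomain_surjective hf y.coeff
  exact ⟨.ofCoeff v, congrArg MonoidAlgebra.ofCoeff hv⟩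

theorem mapDomainRingHom_transition_comp
    (hcomp : ∀ (k m n : ℕ) (hnm : n ≤ m) (hmk : m ≤ k),
      (π m n hnm).comp (π k m hmk) = π k n (le_trans hnm hmk))
    {k m n : ℕ} (hnm : n ≤ m) (hmk : m ≤ k) (x : MonoidAlgebra R (Γ k)) :
    mapDomainRingHom R (π m n hnm) (mapDomainRingHom R (π k m hmk) x) =
      mapDomainRingHom R (π k n (hnm.trans hmk)) x := by
  rw [← RingHom.comp_apply, ← mapDomainRingHom_comp, hcomp]

theorem exists_iwasawaGamma_apply_eq (hid : ∀ n, π n n le_rfl = MonoidHom.id (Γ n))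
    (hcomp : ∀ (k m n : ℕ) (hnm : n ≤ m) (hmk : m ≤ k),
      (π m n hnm).comp (π k m hmk) = π k n (le_trans hnm hmk))
    (hsurj : ∀ (m n : ℕ) (h : n ≤ m), Function.Surjective (π m n h)) {m : ℕ} (g : Γ m) :
    ∃ γ : IwasawaGamma Γ π, (γ : ∀ n, Γ n) m = g := by
  obtain ⟨s, hs, hsm⟩ := exists_compatible_eq_of_surjective (fun m n h => π m n h)
    (fun n x => by rw [hid]; rfl)
    (fun k m n hnm hmk x => DFunLike.congr_fun (hcomp k m n hnm hmk) x)
    (fun n => hsurj (n + 1) n n.le_succ) g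
  exact ⟨⟨s, hs⟩, hsm⟩

end Transition

noncomputable def augmentationSpan (Γ : ℕ → Type) [∀ n, CommGroup (Γ n)] [∀ n, Fintype (Γ n)]
    (π : ∀ m n : ℕ, n ≤ m → (Γ m →* Γ n)) (n : ℕ) : Ideal (IwasawaAlgebra ℓ Γ π) :=
  Ideal.span ((fun γ : IwasawaGamma Γ π => gammaToLambda ℓ Γ π γ - 1) ''
    {γ : IwasawaGamma Γ π | (γ : ∀ n, Γ n) n = 1})

section AugmentationIdeal

open scoped Classical

variable {Γ : ℕ → Type} [∀ n, CommGroup (Γ n)] [∀ n, Fintype (Γ n)]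
  {π : ∀ m n : ℕ, n ≤ m → (Γ m →* Γ n)}

theorem isUnit_card_ker_transition (hpgroup : ∀ n, IsPGroup p (Γ n)) (hlp : ℓ ≠ p) {n M : ℕ}
    (h : n ≤ M) : IsUnit (#{g | π M n h g = 1} : ℤ_[ℓ]) :=
  isUnit_card_ker_of_isPGroup (hpgroup M) hlp (π M n h)

theorem lambdaProj_surjective (hid : ∀ n, π n n le_rfl = MonoidHom.id (Γ n))
    (hcomp : ∀ (k m n : ℕ) (hnm : n ≤ m) (hmk : m ≤ k),
      (π m n hnm).comp (π k m hmk) = π k n (le_trans hnm hmk))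
    (hsurj : ∀ (m n : ℕ) (h : n ≤ m), Function.Surjective (π m n h)) (n : ℕ) :
    Function.Surjective (lambdaProj ℓ Γ π n) := by
  intro y
  obtain ⟨s, hs, hsn⟩ := exists_compatible_eq_of_surjective
    (fun m n h => mapDomainRingHom ℤ_[ℓ] (π m n h))
    (fun n x => by rw [hid, mapDomainRingHom_id]; rfl)
    (fun k m n hnm hmk x => mapDomainRingHom_transition_comp ℤ_[ℓ] hcomp hnm hmk x)
    (fun n => mapDomainRingHom_surjective ℤ_[ℓ] (hsurj (n + 1) n n.le_succ)) y
  exact ⟨⟨s, hs⟩, hsn⟩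

theorem lambdaProj_gammaToLambda (n : ℕ) (γ : IwasawaGamma Γ π) :
    lambdaProj ℓ Γ π n (gammaToLambda ℓ Γ π γ) = single ((γ : ∀ n, Γ n) n) 1 :=
  rfl

theorem lambdaProj_eq_of_le {x y : IwasawaAlgebra ℓ Γ π} {j M : ℕ} (h : j ≤ M)
    (hxy : lambdaProj ℓ Γ π M x = lambdaProj ℓ Γ π M y) :
    lambdaProj ℓ Γ π j x = lambdaProj ℓ Γ π j y :=
  (x.2 M j h).symm.trans ((congrArg _ hxy).trans (y.2 M j h))

theorem isClosed_ker_lambdaProj (n : ℕ) :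
    IsClosed (RingHom.ker (lambdaProj ℓ Γ π n) : Set (IwasawaAlgebra ℓ Γ π)) := by
  have hcont : Continuous fun x : IwasawaAlgebra ℓ Γ π => ⇑(lambdaProj ℓ Γ π n x).coeff :=
    (continuous_induced_dom (f := fun y : MonoidAlgebra ℤ_[ℓ] (Γ n) => ⇑y.coeff)).comp
      ((continuous_apply n).comp continuous_subtype_val)
  convert (isClosed_singleton (x := (0 : Γ n → ℤ_[ℓ]))).preimage hcont
  ext x
  simp

theorem augmentationSpan_le_ker (n : ℕ) :
    augmentationSpan ℓ Γ π n ≤ RingHom.ker (lambdaProj ℓ Γ π n) := by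
  rw [augmentationSpan, Ideal.span_le]
  rintro _ ⟨γ, hγ, rfl⟩
  rw [SetLike.mem_coe, RingHom.mem_ker, map_sub, map_one, lambdaProj_gammaToLambda,
    Set.mem_ofPred_eq.mp hγ, one_def, sub_self]

theorem exists_mem_augmentationSpan_lambdaProj_eq (hpgroup : ∀ n, IsPGroup p (Γ n)) (hlp : ℓ ≠ p)
    (hid : ∀ n, π n n le_rfl = MonoidHom.id (Γ n))
    (hcomp : ∀ (k m n : ℕ) (hnm : n ≤ m) (hmk : m ≤ k),
      (π m n hnm).comp (π k m hmk) = π k n (le_trans hnm hmk))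
    (hsurj : ∀ (m n : ℕ) (h : n ≤ m), Function.Surjective (π m n h)) {n M : ℕ} (h : n ≤ M) :
    ∃ z ∈ augmentationSpan ℓ Γ π n, lambdaProj ℓ Γ π M z = 1 - kerAverage ℤ_[ℓ] (π M n h) := by
  rw [← Ideal.mem_map_iff_of_surjective _ (lambdaProj_surjective ℓ hid hcomp hsurj M),
    augmentationSpan, Ideal.map_span]
  refine Ideal.span_mono ?_
    (one_sub_kerAverage_mem_span (π M n h) (isUnit_card_ker_transition ℓ p hpgroup hlp h))
  rintro _ ⟨k, hk, rfl⟩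
  obtain ⟨γ, hγ⟩ := exists_iwasawaGamma_apply_eq hid hcomp hsurj k
  refine ⟨gammaToLambda ℓ Γ π γ - 1, ⟨γ, ?_, rfl⟩, ?_⟩
  · rw [Set.mem_ofPred_eq, ← γ.2 M n h, hγ]
    exact hk
  · rw [map_sub, map_one, lambdaProj_gammaToLambda, hγ]

theorem one_sub_kerAverage_mul_lambdaProj {n M : ℕ} (h : n ≤ M) {x : IwasawaAlgebra ℓ Γ π}
    (hx : x ∈ RingHom.ker (lambdaProj ℓ Γ π n)) :
    (1 - kerAverage ℤ_[ℓ] (π M n h)) * lambdaProj ℓ Γ π M x = lambdaProj ℓ Γ π M x :=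
  one_sub_kerAverage_mul ((x.2 M n h).trans hx)

theorem ker_lambdaProj_subset_closure (hpgroup : ∀ n, IsPGroup p (Γ n)) (hlp : ℓ ≠ p)
    (hid : ∀ n, π n n le_rfl = MonoidHom.id (Γ n))
    (hcomp : ∀ (k m n : ℕ) (hnm : n ≤ m) (hmk : m ≤ k),
      (π m n hnm).comp (π k m hmk) = π k n (le_trans hnm hmk))
    (hsurj : ∀ (m n : ℕ) (h : n ≤ m), Function.Surjective (π m n h)) (n : ℕ) :
    (RingHom.ker (lambdaProj ℓ Γ π n) : Set (IwasawaAlgebra ℓ Γ π)) ⊆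
      closure (augmentationSpan ℓ Γ π n : Set (IwasawaAlgebra ℓ Γ π)) := by
  intro x hx
  choose z hzJ hz using fun m => exists_mem_augmentationSpan_lambdaProj_eq ℓ p hpgroup hlp hid
    hcomp hsurj (Nat.le_add_right n m)
  refine mem_closure_of_tendsto (f := fun m => z m * x) (b := Filter.atTop) ?_
    (Filter.Eventually.of_forall fun m => Ideal.mul_mem_right x _ (hzJ m))
  rw [tendsto_subtype_rng, tendsto_pi_nhds]
  intro j
  refine Filter.Tendsto.congr' ?_ tendsto_const_nhds
  filter_upwards [Filter.eventually_ge_atTop j] with m hm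
  refine (lambdaProj_eq_of_le ℓ (x := z m * x) (y := x) (hm.trans (Nat.le_add_left m n)) ?_).symm
  rw [map_mul, hz, one_sub_kerAverage_mul_lambdaProj ℓ _ hx]

theorem exists_mem_ker_lambdaProj_mul_eq_self (hpgroup : ∀ n, IsPGroup p (Γ n)) (hlp : ℓ ≠ p)
    (hid : ∀ n, π n n le_rfl = MonoidHom.id (Γ n))
    (hcomp : ∀ (k m n : ℕ) (hnm : n ≤ m) (hmk : m ≤ k),
      (π m n hnm).comp (π k m hmk) = π k n (le_trans hnm hmk))
    (hsurj : ∀ (m n : ℕ) (h : n ≤ m), Function.Surjective (π m n h)) (n : ℕ) :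
    ∃ ε ∈ RingHom.ker (lambdaProj ℓ Γ π n),
      ∀ x ∈ RingHom.ker (lambdaProj ℓ Γ π n), ε * x = x := by
  let u : ∀ k, MonoidAlgebra ℤ_[ℓ] (Γ (n + k)) := fun k =>
    1 - kerAverage ℤ_[ℓ] (π (n + k) n (Nat.le_add_right n k))
  have hu : ∀ a b (h : b ≤ a),
      mapDomainRingHom ℤ_[ℓ] (π (n + a) (n + b) (Nat.add_le_add_left h n)) (u a) = u b := by
    intro a b h
    have hab : n + b ≤ n + a := Nat.add_le_add_left h n
    dsimp only [u]
    rw [map_sub, map_one, ← hcomp (n + a) (n + b) n (Nat.le_add_right n b) hab,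
      mapDomainRingHom_kerAverage_comp (π (n + b) n (Nat.le_add_right n b)) (hsurj _ _ hab)
        (isUnit_card_ker_transition ℓ p hpgroup hlp hab)]
  obtain ⟨s, hs, hsu⟩ := exists_compatible_extension_of_tail
    (fun m j h => mapDomainRingHom ℤ_[ℓ] (π m j h))
    (fun k m n hnm hmk x => mapDomainRingHom_transition_comp ℤ_[ℓ] hcomp hnm hmk x) u hu
  refine ⟨⟨s, hs⟩, ?_, fun x hx => Subtype.ext (funext fun j => ?_)⟩
  · have haverage_id := mapDomainRingHom_kerAverage (π n n le_rfl)
      (isUnit_card_ker_transition ℓ p hpgroup hlp le_rfl)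
    rw [hid, mapDomainRingHom_id, RingHom.id_apply] at haverage_id
    refine (hsu 0).trans ?_
    show 1 - kerAverage ℤ_[ℓ] (π n n le_rfl) = 0
    rw [hid, haverage_id, sub_self]
  · refine lambdaProj_eq_of_le ℓ (x := ⟨s, hs⟩ * x) (y := x) (Nat.le_add_left j n) ?_
    rw [map_mul, show lambdaProj ℓ Γ π (n + j) ⟨s, hs⟩ = u j from hsu j]
    exact one_sub_kerAverage_mul_lambdaProj ℓ _ hx

end AugmentationIdeal

/-- Augmentation ideals of the Iwasawa algebra: with `G_n := ker(Γ → Γ_n)` and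
`I_n` the closure of the ideal of `Λ` generated by `{γ - 1 : γ ∈ G_n}`, the natural
projection `Λ → ℤ_ℓ[Γ_n]` is surjective with kernel `I_n` (hence `Λ/I_n ≅ ℤ_ℓ[Γ_n]`),
and `I_n` is idempotent: `I_n² = I_n`. -/
theorem augmentation_ideal_ker_and_idempotent
    (Γ : ℕ → Type) [∀ n, CommGroup (Γ n)] [∀ n, Fintype (Γ n)]
    (π : ∀ m n : ℕ, n ≤ m → (Γ m →* Γ n))
    (hpgroup : ∀ n, IsPGroup p (Γ n)) (hlp : ℓ ≠ p)
    (hid : ∀ n, π n n le_rfl = MonoidHom.id (Γ n))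
    (hcomp : ∀ (k m n : ℕ) (hnm : n ≤ m) (hmk : m ≤ k),
      (π m n hnm).comp (π k m hmk) = π k n (le_trans hnm hmk))
    (hsurj : ∀ (m n : ℕ) (h : n ≤ m), Function.Surjective (π m n h))
    (n : ℕ)
    -- the ideal generated by `{γ - 1 : γ ∈ G_n}`, `G_n = ker (Γ → Γ_n)`:
    (J : Ideal (IwasawaAlgebra ℓ Γ π))
    (hJ : J = Ideal.span ((fun γ : IwasawaGamma Γ π => gammaToLambda ℓ Γ π γ - 1) ''
      {γ : IwasawaGamma Γ π | (γ : ∀ n, Γ n) n = 1})) :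
    Function.Surjective (lambdaProj ℓ Γ π n) ∧
    ((RingHom.ker (lambdaProj ℓ Γ π n) : Set (IwasawaAlgebra ℓ Γ π)) =
      closure (J : Set (IwasawaAlgebra ℓ Γ π))) ∧
    (∃ e : (IwasawaAlgebra ℓ Γ π ⧸ RingHom.ker (lambdaProj ℓ Γ π n)) ≃+*
        MonoidAlgebra ℤ_[ℓ] (Γ n),
      ∀ x, e (Ideal.Quotient.mk (RingHom.ker (lambdaProj ℓ Γ π n)) x) =
        lambdaProj ℓ Γ π n x) ∧
    (∀ K : Ideal (IwasawaAlgebra ℓ Γ π),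
      (K : Set (IwasawaAlgebra ℓ Γ π)) = closure (J : Set (IwasawaAlgebra ℓ Γ π)) →
        K * K = K) := by
  have hsurjP := lambdaProj_surjective ℓ hid hcomp hsurj n
  have hker : (RingHom.ker (lambdaProj ℓ Γ π n) : Set (IwasawaAlgebra ℓ Γ π)) =
      closure (J : Set (IwasawaAlgebra ℓ Γ π)) := by
    subst hJ
    exact (ker_lambdaProj_subset_closure ℓ p hpgroup hlp hid hcomp hsurj n).antisymm
      (closure_minimal (augmentationSpan_le_ker ℓ n) (isClosed_ker_lambdaProj ℓ n))
  obtain ⟨ε, hε, hεx⟩ := exists_mem_ker_lambdaProj_mul_eq_self ℓ p hpgroup hlp hid hcomp hsurj n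
  refine ⟨hsurjP, hker, ⟨RingHom.quotientKerEquivOfSurjective hsurjP,
    RingHom.kerLift_mk (lambdaProj ℓ Γ π n)⟩, fun K hK => ?_⟩
  obtain rfl : K = RingHom.ker (lambdaProj ℓ Γ π n) := SetLike.ext' (hK.trans hker.symm)
  exact le_antisymm Ideal.mul_le_left fun x hx => hεx x hx ▸ Ideal.mul_mem_mul hε hx
end

section
/- Let (R_i)_{i∈I} be a family of discrete valuation rings, with maximal ideals 𝔪_i and residue fields k_i := R_i/𝔪_i, let M_i be an R_i-module for each i, and regard M := ∏_{i∈I} M_i as a module over the product ring R := ∏_{i∈I} R_i (componentwise operations). Then M is a finitely generated R-module if and only if every M_i is a finitely generated R_i-module and the function i ↦ dim_{k_i}(M_i/𝔪_i M_i) is bounded on I. -/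
/-!
Over a product ring, a finite generating family of `∏ M i` evaluates to generating families of
the factors of one common size, and conversely generating families `v i : Fin n → M i` assemble
into the generating family `j ↦ (i ↦ v i j)` of the product. So `∏ M i` is finitely generated
exactly when the factors are generated by uniformly boundedly many elements. Over a local ring,
Nakayama's lemma identifies the least number of generators of a finite module `N` with
`dim_k (N / 𝔪 N)`.
-/

open Submodule Function Module Set

section Pi

variable {ι : Type*} (R : ι → Type*) {M : ι → Type*} [∀ i, Semiring (R i)]
  [∀ i, AddCommMonoid (M i)] [∀ i, Module (R i) (M i)]

def Pi.evalSemilinearMap (i : ι) : (∀ i, M i) →ₛₗ[Pi.evalRingHom R i] M i where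
  toFun f := f i
  map_add' _ _ := rfl
  map_smul' _ _ := rfl

theorem Pi.evalSemilinearMap_surjective (i : ι) :
    Surjective (Pi.evalSemilinearMap R (M := M) i) := by
  classical
  exact fun x => ⟨Pi.single i x, Pi.single_eq_same i x⟩

variable {R}

theorem Submodule.span_range_pi_eq_top_iff {J : Type*} [Fintype J] (v : J → ∀ i, M i) :
    span (∀ i, R i) (range v) = ⊤ ↔ ∀ i, span (R i) (range fun j => v j i) = ⊤ := by
  constructor
  · intro hv i
    rw [← LinearMap.range_eq_top.mpr (Pi.evalSemilinearMap_surjective R i),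
      LinearMap.range_eq_map, ← hv, map_span, ← range_comp]
    rfl
  · intro hv
    refine eq_top_iff.mpr fun x _ => (mem_span_range_iff_exists_fun _).mpr ?_
    choose c hc using fun i =>
      (mem_span_range_iff_exists_fun (R i)).mp ((hv i).ge (mem_top (x := x i)))
    exact ⟨fun j i => c i j, funext fun i => by simpa [Finset.sum_apply] using hc i⟩

theorem Module.finite_pi_iff_exists_fin_generating_families :
    Module.Finite (∀ i, R i) (∀ i, M i) ↔
      ∃ n, ∀ i, ∃ v : Fin n → M i, span (R i) (range v) = ⊤ := by
  constructor
  · intro _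
    obtain ⟨n, v, hv⟩ := Module.Finite.exists_fin (R := ∀ i, R i) (M := ∀ i, M i)
    exact ⟨n, fun i => ⟨_, (span_range_pi_eq_top_iff v).mp hv i⟩⟩
  · rintro ⟨n, hv⟩
    choose v hv using hv
    exact ⟨fg_iff_exists_fin_generating_family.mpr
      ⟨n, fun j i => v i j, (span_range_pi_eq_top_iff _).mpr hv⟩⟩

end Pi

theorem exists_fin_span_range_eq_top_iff_finrank_le {K V : Type*} [DivisionRing K]
    [AddCommGroup V] [Module K V] [Module.Finite K V] (n : ℕ) :
    (∃ v : Fin n → V, span K (range v) = ⊤) ↔ finrank K V ≤ n := by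
  constructor
  · rintro ⟨v, hv⟩
    simpa using finrank_le_of_span_eq_top hv
  · intro h
    let b := Module.finBasis K V
    refine ⟨extend (Fin.castLE h) b 0, eq_top_iff.mpr ?_⟩
    rw [← b.span_eq]
    refine span_mono ?_
    rintro _ ⟨j, rfl⟩
    exact ⟨Fin.castLE h j, (Fin.castLE_injective h).extend_apply _ _ _⟩

namespace IsLocalRing

variable {A N : Type*} [CommRing A] [IsLocalRing A] [AddCommGroup N] [Module A N]
  [Module.Finite A N]

local notation "𝔪" => maximalIdeal A

theorem span_image_mkQ_eq_top_iff (s : Set N) :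
    span (A ⧸ 𝔪) ((𝔪 • (⊤ : Submodule A N)).mkQ '' s) = ⊤ ↔ span A s = ⊤ := by
  rw [← map_mkQ_eq_top (N := span A s), map_span,
    ← restrictScalars_span A (A ⧸ 𝔪) Ideal.Quotient.mk_surjective, restrictScalars_eq_top_iff]

theorem exists_fin_span_range_eq_top_iff_finrank_quotient_le (n : ℕ) :
    (∃ v : Fin n → N, span A (range v) = ⊤) ↔
      finrank (A ⧸ 𝔪) (N ⧸ 𝔪 • (⊤ : Submodule A N)) ≤ n := by
  let := Ideal.Quotient.field 𝔪
  have : Module.Finite (A ⧸ 𝔪) (N ⧸ 𝔪 • (⊤ : Submodule A N)) :=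
    Module.Finite.of_restrictScalars_finite A _ _
  rw [← exists_fin_span_range_eq_top_iff_finrank_le]
  constructor
  · rintro ⟨v, hv⟩
    exact ⟨mkQ _ ∘ v, by rwa [range_comp, span_image_mkQ_eq_top_iff]⟩
  · rintro ⟨w, hw⟩
    refine ⟨surjInv (mkQ_surjective _) ∘ w, ?_⟩
    rwa [← span_image_mkQ_eq_top_iff, ← range_comp, ← comp_assoc, comp_surjInv]

end IsLocalRing

/-- Finite-generation criterion for a product of modules over a product of discrete
valuation rings: `M = ∏ i, M i` is finitely generated over `R = ∏ i, R i` if and only if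
every `M i` is finitely generated over `R i` and the residual dimensions
`dim_{k_i} (M_i / 𝔪_i M_i)` are bounded. -/
theorem module_finite_pi_iff_locally_finite_and_bounded_rank
    (ι : Type*) (R : ι → Type*) (M : ι → Type*)
    [∀ i, CommRing (R i)] [∀ i, IsDomain (R i)] [∀ i, IsDiscreteValuationRing (R i)]
    [∀ i, AddCommGroup (M i)] [∀ i, Module (R i) (M i)] :
    Module.Finite (∀ i, R i) (∀ i, M i) ↔
      ((∀ i, Module.Finite (R i) (M i)) ∧
        ∃ C : ℕ, ∀ i,
          Module.finrank (R i ⧸ IsLocalRing.maximalIdeal (R i))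
            ((M i) ⧸ (IsLocalRing.maximalIdeal (R i)) • (⊤ : Submodule (R i) (M i))) ≤ C) := by
  rw [Module.finite_pi_iff_exists_fin_generating_families]
  constructor
  · rintro ⟨n, hv⟩
    have hfin (i : ι) : Module.Finite (R i) (M i) :=
      ⟨fg_iff_exists_fin_generating_family.mpr ⟨n, hv i⟩⟩
    exact ⟨hfin, n, fun i =>
      (IsLocalRing.exists_fin_span_range_eq_top_iff_finrank_quotient_le n).mp (hv i)⟩
  · rintro ⟨hfin, C, hC⟩
    exact ⟨C, fun i =>
      (IsLocalRing.exists_fin_span_range_eq_top_iff_finrank_quotient_le C).mpr (hC i)⟩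
end
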